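/- (Theorem 2.2(c)) Let λ ≥ 0. Any minimizer θ ∈ ℝ^{N+1} of the ℓ1-regularized objective R(θ) + λ Σ_{i=1}^N |θ_i| satisfies, for every i ∈ {1,…,N}, the soft-thresholding formula θ_i = (2/σ) ( (f̂({i}) - λ/σ)_+ - (-f̂({i}) - λ/σ)_+ ), where z_+ = max(z,0); equivalently θ_i = (2/σ) sign(f̂({i})) (|f̂({i})| - λ/σ)_+. -/

import Mathlib

/-!
Writing `x̄ⱼ = p + (σ/2) φ_{j}(x)`, the residual of the linear model is `f - c - ∑ⱼ (σθⱼ/2) φ_{j}`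
with `c = θ₀ + p ∑ⱼ θⱼ`, so orthonormality of the `φ_{j}` gives
`R(θ) = E[(f - c)²] + ∑ⱼ (p(1-p) θⱼ² - σ f̂({j}) θⱼ)`. Hence the penalized objective separates:
moving `θᵢ` while shifting `θ₀` to keep `c` fixed shows that `θᵢ` minimizes the scalar problem
`p(1-p) t² - σ f̂({i}) t + λ|t|`, whose unique minimizer is the soft-thresholded value.
-/

open Finset

namespace Paper

noncomputable section

/-- Map a Boolean coordinate to its ±1 value. -/
def sgn (b : Bool) : ℝ := if b then 1 else -1

/-- σ = 2√(p(1-p)). -/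
def sigma (p : ℝ) : ℝ := 2 * Real.sqrt (p * (1 - p))

/-- Probability of a point x under the p-biased distribution B_p. -/
def wt (N : ℕ) (p : ℝ) (x : Fin N → Bool) : ℝ :=
  ∏ i, (if x i then p else 1 - p)

/-- Expectation under the p-biased distribution B_p (finite weighted sum). -/
def expect (N : ℕ) (p : ℝ) (g : (Fin N → Bool) → ℝ) : ℝ :=
  ∑ x : Fin N → Bool, wt N p x * g x

/-- The basis function φ_S(x) = ∏_{i∈S} (x_i - μ)/σ with μ = 2p-1. -/
def phi (N : ℕ) (p : ℝ) (S : Finset (Fin N)) (x : Fin N → Bool) : ℝ :=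
  ∏ i ∈ S, (sgn (x i) - (2 * p - 1)) / sigma p

/-- Fourier coefficient f̂(S) = E_{x~B_p}[f(x) φ_S(x)]. -/
def coeff (N : ℕ) (p : ℝ) (f : (Fin N → Bool) → ℝ) (S : Finset (Fin N)) : ℝ :=
  expect N p (fun x => f x * phi N p S x)

/-- Individual influence Inf_i(f) = E_{x~B_p}[f(x|_{i→1}) - f(x|_{i→-1})]. -/
def infl (N : ℕ) (p : ℝ) (f : (Fin N → Bool) → ℝ) (i : Fin N) : ℝ :=
  expect N p (fun x => f (Function.update x i true) - f (Function.update x i false))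

/-- x|_{I→-1}: set all coordinates in I to -1. -/
def setNeg (N : ℕ) (I : Finset (Fin N)) (x : Fin N → Bool) : Fin N → Bool :=
  fun j => if j ∈ I then false else x j

/-- Group influence Inf_I(f) = E_{x~B_p}[f(x) - f(x|_{I→-1})]. -/
def inflSet (N : ℕ) (p : ℝ) (f : (Fin N → Bool) → ℝ) (I : Finset (Fin N)) : ℝ :=
  expect N p (fun x => f x - f (setNeg N I x))

/-- Least-squares objective R(θ) for the linear datamodel (x̄_i = (1+x_i)/2 ∈ {0,1}). -/
def Rres (N : ℕ) (p : ℝ) (f : (Fin N → Bool) → ℝ) (θ : Fin (N + 1) → ℝ) : ℝ :=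
  expect N p
    (fun x => (f x - θ 0 - ∑ i : Fin N, θ i.succ * (if x i then (1 : ℝ) else 0)) ^ 2)

/-- Joint probability of a single coordinate pair (x_i, x'_i) under the ρ-correlated
distribution. -/
def pairWt (p ρ : ℝ) (b b' : Bool) : ℝ :=
  if b then (if b' then p * (1 - (1 - ρ) * (1 - p)) else p * ((1 - ρ) * (1 - p)))
  else (if b' then (1 - p) * ((1 - ρ) * p) else (1 - p) * (1 - (1 - ρ) * p))

/-- Probability of the pair (x, x') under the ρ-correlated distribution B_{p,ρ}. -/
def wtPair (N : ℕ) (p ρ : ℝ) (x x' : Fin N → Bool) : ℝ :=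
  ∏ i, pairWt p ρ (x i) (x' i)

/-- Noise stability h(ρ) = E_{(x,x')~B_{p,ρ}}[f(x) f(x')]. -/
def noiseStab (N : ℕ) (p ρ : ℝ) (f : (Fin N → Bool) → ℝ) : ℝ :=
  ∑ x : Fin N → Bool, ∑ x' : Fin N → Bool, wtPair N p ρ x x' * (f x * f x')

section Expect

variable {N : ℕ} {p : ℝ}

theorem expect_add (g h : (Fin N → Bool) → ℝ) :
    expect N p (fun x => g x + h x) = expect N p g + expect N p h := by
  simp only [expect, mul_add, Finset.sum_add_distrib]

theorem expect_sub (g h : (Fin N → Bool) → ℝ) :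
    expect N p (fun x => g x - h x) = expect N p g - expect N p h := by
  simp only [expect, mul_sub, Finset.sum_sub_distrib]

theorem expect_const_mul (c : ℝ) (g : (Fin N → Bool) → ℝ) :
    expect N p (fun x => c * g x) = c * expect N p g := by
  simp only [expect, Finset.mul_sum, mul_left_comm]

theorem expect_sum {ι : Type*} (s : Finset ι) (g : ι → (Fin N → Bool) → ℝ) :
    expect N p (fun x => ∑ j ∈ s, g j x) = ∑ j ∈ s, expect N p (g j) := by
  simp only [expect, Finset.mul_sum]
  exact Finset.sum_comm

theorem expect_prod (h : Fin N → Bool → ℝ) :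
    expect N p (fun x => ∏ k, h k (x k)) = ∏ k, (p * h k true + (1 - p) * h k false) := by
  unfold expect wt
  simp_rw [← Finset.prod_mul_distrib]
  rw [← Fintype.prod_sum fun k (b : Bool) => (if b then p else 1 - p) * h k b]
  simp

theorem expect_comp_eval (c : Bool → ℝ) (i : Fin N) :
    expect N p (fun x => c (x i)) = p * c true + (1 - p) * c false := by
  have h := expect_prod (p := p) (fun k b => if k = i then c b else 1)
  simp only [Finset.prod_ite_eq', Finset.mem_univ, if_true] at h
  rw [h, Finset.prod_congr rfl fun k _ =>
    show _ = if k = i then p * c true + (1 - p) * c false else 1 by split_ifs <;> ring]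
  simp

theorem expect_comp_eval_mul_comp_eval (c d : Bool → ℝ) {i j : Fin N} (hij : i ≠ j) :
    expect N p (fun x => c (x i) * d (x j))
      = (p * c true + (1 - p) * c false) * (p * d true + (1 - p) * d false) := by
  have h := expect_prod (p := p)
    (fun k b => (if k = i then c b else 1) * (if k = j then d b else 1))
  simp only [Finset.prod_mul_distrib, Finset.prod_ite_eq', Finset.mem_univ, if_true] at h
  rw [h, Finset.prod_congr rfl fun k _ =>
    show _ = (if k = i then p * c true + (1 - p) * c false else 1) *
      (if k = j then p * d true + (1 - p) * d false else 1) by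
      split_ifs with hi hj
      exacts [absurd (hi.symm.trans hj) hij, by ring, by ring, by ring]]
  simp only [Finset.prod_mul_distrib, Finset.prod_ite_eq', Finset.mem_univ, if_true]

end Expect

section Fourier

variable {N : ℕ} {p : ℝ}

theorem sigma_pos (hp : 0 < p) (hp1 : p < 1) : 0 < sigma p := by
  unfold sigma
  have := Real.sqrt_pos.2 (mul_pos hp (sub_pos.2 hp1))
  positivity

theorem sigma_sq (hp : 0 ≤ p) (hp1 : p ≤ 1) : sigma p ^ 2 = 4 * (p * (1 - p)) := by
  rw [sigma, mul_pow, Real.sq_sqrt (mul_nonneg hp (sub_nonneg.2 hp1))]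
  norm_num

theorem phi_singleton (i : Fin N) (x : Fin N → Bool) :
    phi N p {i} x = (sgn (x i) - (2 * p - 1)) / sigma p :=
  Finset.prod_singleton _ _

theorem expect_phi_singleton (i : Fin N) : expect N p (phi N p {i}) = 0 := by
  rw [funext (phi_singleton i), expect_comp_eval fun b => (sgn b - (2 * p - 1)) / sigma p]
  simp only [sgn, if_true, Bool.false_eq_true, if_false]
  ring

theorem expect_phi_singleton_mul_phi_singleton (hp : 0 < p) (hp1 : p < 1) (i j : Fin N) :
    expect N p (fun x => phi N p {i} x * phi N p {j} x) = if i = j then 1 else 0 := by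
  simp only [phi_singleton]
  split_ifs with hij
  · subst hij
    have hσ := (sigma_pos hp hp1).ne'
    rw [expect_comp_eval fun b =>
      (sgn b - (2 * p - 1)) / sigma p * ((sgn b - (2 * p - 1)) / sigma p)]
    simp only [sgn, if_true, Bool.false_eq_true, if_false]
    field_simp
    linear_combination (-1 : ℝ) * sigma_sq hp.le hp1.le
  · rw [expect_comp_eval_mul_comp_eval (fun b => (sgn b - (2 * p - 1)) / sigma p)
      (fun b => (sgn b - (2 * p - 1)) / sigma p) hij]
    simp only [sgn, if_true, Bool.false_eq_true, if_false]
    ring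

theorem indicator_eq_add_phi (hp : 0 < p) (hp1 : p < 1) (i : Fin N) (x : Fin N → Bool) :
    (if x i then (1 : ℝ) else 0) = p + sigma p / 2 * phi N p {i} x := by
  have hσ := (sigma_pos hp hp1).ne'
  rw [phi_singleton]
  cases x i <;> simp only [sgn, if_true, Bool.false_eq_true, if_false] <;> field_simp <;> ring

theorem coeff_sub_const (f : (Fin N → Bool) → ℝ) (c : ℝ) (i : Fin N) :
    coeff N p (fun x => f x - c) {i} = coeff N p f {i} := by
  simp only [coeff, sub_mul, expect_sub, expect_const_mul, expect_phi_singleton, mul_zero, sub_zero]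

theorem expect_sq_sub_sum_phi (hp : 0 < p) (hp1 : p < 1) (g : (Fin N → Bool) → ℝ)
    (a : Fin N → ℝ) :
    expect N p (fun x => (g x - ∑ j, a j * phi N p {j} x) ^ 2)
      = expect N p (fun x => g x ^ 2) - 2 * ∑ j, a j * coeff N p g {j} + ∑ j, a j ^ 2 := by
  have hpt : ∀ x, (g x - ∑ j, a j * phi N p {j} x) ^ 2 = g x ^ 2
      - 2 * ∑ j, a j * (g x * phi N p {j} x)
      + ∑ j, ∑ k, a j * a k * (phi N p {j} x * phi N p {k} x) := by
    intro x
    have hlin : ∑ j, a j * (g x * phi N p {j} x) = g x * ∑ j, a j * phi N p {j} x := by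
      rw [Finset.mul_sum]
      exact Finset.sum_congr rfl fun j _ => by ring
    have hquad : ∑ j, ∑ k, a j * a k * (phi N p {j} x * phi N p {k} x)
        = (∑ j, a j * phi N p {j} x) ^ 2 := by
      rw [sq, Finset.sum_mul_sum]
      exact Finset.sum_congr rfl fun j _ => Finset.sum_congr rfl fun k _ => by ring
    rw [hlin, hquad]
    ring
  simp only [hpt, expect_add, expect_sub, expect_const_mul, expect_sum,
    expect_phi_singleton_mul_phi_singleton hp hp1, coeff]
  simp [sq]

end Fourier

section SoftThreshold

def softThreshold (lam z : ℝ) : ℝ := max (z - lam) 0 - max (-z - lam) 0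

def penalizedQuadratic (a b lam t : ℝ) : ℝ := a * t ^ 2 - b * t + lam * |t|

variable {lam : ℝ}

theorem softThreshold_mul {s : ℝ} (hs : 0 < s) (z : ℝ) :
    softThreshold lam (s * z) = s * softThreshold (lam / s) z := by
  have hmax : ∀ w, max (s * w - lam) 0 = s * max (w - lam / s) 0 := fun w => by
    rw [mul_max_of_nonneg _ _ hs.le, mul_sub, mul_div_cancel₀ _ hs.ne', mul_zero]
  simp only [softThreshold, ← mul_neg, hmax, mul_sub]

theorem softThreshold_eq_sign_mul (hlam : 0 ≤ lam) (z : ℝ) :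
    softThreshold lam z = Real.sign z * max (|z| - lam) 0 := by
  unfold softThreshold
  rcases lt_trichotomy z 0 with hz | rfl | hz
  · rw [Real.sign_of_neg hz, abs_of_neg hz, max_eq_right (by linarith : z - lam ≤ 0)]
    ring
  · simp
  · rw [Real.sign_of_pos hz, abs_of_pos hz, max_eq_right (by linarith : -z - lam ≤ 0)]
    ring

/-- `z - softThreshold lam z` is a subgradient of `lam * |·|` at `softThreshold lam z`. -/
theorem sub_softThreshold_subgradient (hlam : 0 ≤ lam) (z t : ℝ) :
    (z - softThreshold lam z) * t ≤ lam * |t| ∧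
      (z - softThreshold lam z) * softThreshold lam z = lam * |softThreshold lam z| := by
  have hlt : lam * t ≤ lam * |t| := mul_le_mul_of_nonneg_left (le_abs_self t) hlam
  have hnt : lam * -t ≤ lam * |t| := mul_le_mul_of_nonneg_left (neg_le_abs t) hlam
  unfold softThreshold
  rcases lt_or_ge lam z with hz | hz
  · rw [max_eq_left (by linarith : 0 ≤ z - lam), max_eq_right (by linarith : -z - lam ≤ 0),
      sub_zero, abs_of_nonneg (by linarith : 0 ≤ z - lam)]
    constructor <;> linarith
  rcases lt_or_ge z (-lam) with hz' | hz'
  · rw [max_eq_right (by linarith : z - lam ≤ 0), max_eq_left (by linarith : 0 ≤ -z - lam),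
      abs_of_nonpos (by linarith : 0 - (-z - lam) ≤ 0)]
    constructor <;> nlinarith
  · rw [max_eq_right (by linarith : z - lam ≤ 0), max_eq_right (by linarith : -z - lam ≤ 0)]
    simp only [sub_zero, abs_zero, mul_zero, and_true]
    calc z * t ≤ |z| * |t| := (le_abs_self _).trans (abs_mul z t).le
      _ ≤ lam * |t| := mul_le_mul_of_nonneg_right (abs_le.2 ⟨hz', hz⟩) (abs_nonneg t)

theorem eq_softThreshold_div_of_forall_le {a b u : ℝ} (ha : 0 < a) (hlam : 0 ≤ lam)
    (hu : ∀ t, penalizedQuadratic a b lam u ≤ penalizedQuadratic a b lam t) :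
    u = softThreshold lam b / (2 * a) := by
  set v := softThreshold lam b / (2 * a) with hv
  have h2av : 2 * a * v = softThreshold lam b := by
    rw [hv]; field_simp
  have hself : (b - 2 * a * v) * v = lam * |v| := by
    rw [h2av, hv, abs_div, abs_of_pos (by positivity : 0 < 2 * a), mul_div_assoc',
      (sub_softThreshold_subgradient hlam b 0).2, mul_div_assoc]
  have hgrowth : penalizedQuadratic a b lam v + a * (u - v) ^ 2
      ≤ penalizedQuadratic a b lam u := by
    have hsub := (sub_softThreshold_subgradient hlam b u).1
    rw [← h2av] at hsub
    unfold penalizedQuadratic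
    nlinarith
  have hsq : (u - v) ^ 2 ≤ 0 := nonpos_of_mul_nonpos_right (by linarith [hu v]) ha
  exact sub_eq_zero.1 (pow_eq_zero_iff two_ne_zero |>.1 (le_antisymm hsq (sq_nonneg _)))

end SoftThreshold

theorem sum_apply_update {ι α M : Type*} [Fintype ι] [DecidableEq ι] [AddCommGroup M]
    (F : ι → α → M) (v : ι → α) (i : ι) (t : α) :
    ∑ j, F j (Function.update v i t j) = ∑ j, F j (v j) + (F i t - F i (v i)) := by
  simp_rw [Function.apply_update F v i t]
  rw [Finset.sum_update_of_mem (Finset.mem_univ i),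
    Finset.sum_eq_add_sum_sdiff_singleton_of_mem (Finset.mem_univ i)]
  abel

def lassoObjective (N : ℕ) (p : ℝ) (f : (Fin N → Bool) → ℝ) (lam : ℝ)
    (θ : Fin (N + 1) → ℝ) : ℝ :=
  Rres N p f θ + lam * ∑ i : Fin N, |θ i.succ|

section Lasso

variable {N : ℕ} {p : ℝ} (f : (Fin N → Bool) → ℝ) (lam : ℝ)

theorem lassoObjective_eq (hp : 0 < p) (hp1 : p < 1) (θ : Fin (N + 1) → ℝ) :
    lassoObjective N p f lam θ
      = expect N p (fun x => (f x - (θ 0 + p * ∑ j : Fin N, θ j.succ)) ^ 2)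
        + ∑ j, penalizedQuadratic (p * (1 - p)) (sigma p * coeff N p f {j}) lam (θ j.succ) := by
  have hres : ∀ x, f x - θ 0 - ∑ j, θ j.succ * (if x j then (1 : ℝ) else 0)
      = f x - (θ 0 + p * ∑ j : Fin N, θ j.succ)
        - ∑ j, sigma p / 2 * θ j.succ * phi N p {j} x := by
    intro x
    have hj : ∀ j, θ j.succ * (if x j then (1 : ℝ) else 0)
        = p * θ j.succ + sigma p / 2 * θ j.succ * phi N p {j} x := fun j => by
      rw [indicator_eq_add_phi hp hp1]; ring
    simp only [hj, Finset.sum_add_distrib, ← Finset.mul_sum]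
    ring
  have hterm : ∀ j, penalizedQuadratic (p * (1 - p)) (sigma p * coeff N p f {j}) lam (θ j.succ)
      = -(2 * (sigma p / 2 * θ j.succ * coeff N p f {j})) + (sigma p / 2 * θ j.succ) ^ 2
        + lam * |θ j.succ| := fun j => by
    rw [penalizedQuadratic, mul_pow, div_pow, sigma_sq hp.le hp1.le]; ring
  simp only [lassoObjective, Rres, hres, expect_sq_sub_sum_phi hp hp1, coeff_sub_const, hterm,
    Finset.sum_add_distrib, Finset.sum_neg_distrib, Finset.mul_sum]
  ring

theorem penalizedQuadratic_le_of_forall_le (hp : 0 < p) (hp1 : p < 1) {θ : Fin (N + 1) → ℝ}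
    (hmin : ∀ θ', lassoObjective N p f lam θ ≤ lassoObjective N p f lam θ') (i : Fin N) (t : ℝ) :
    penalizedQuadratic (p * (1 - p)) (sigma p * coeff N p f {i}) lam (θ i.succ)
      ≤ penalizedQuadratic (p * (1 - p)) (sigma p * coeff N p f {i}) lam t := by
  -- move the `i`-th slope to `t`, shifting the intercept so that the mean of the model is kept
  set θ' : Fin (N + 1) → ℝ :=
    Fin.cons (θ 0 - p * (t - θ i.succ)) (Function.update (Fin.tail θ) i t)
  have hsum : ∀ F : Fin N → ℝ → ℝ,
      ∑ j, F j (θ' j.succ) = ∑ j, F j (θ j.succ) + (F i t - F i (θ i.succ)) := fun F => by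
    simp only [θ', Fin.cons_succ]
    exact sum_apply_update F (Fin.tail θ) i t
  have hmean : θ' 0 + p * ∑ j : Fin N, θ' j.succ = θ 0 + p * ∑ j : Fin N, θ j.succ := by
    rw [hsum fun _ s => s]
    simp only [θ', Fin.cons_zero]
    ring
  have h := hmin θ'
  rw [lassoObjective_eq f lam hp hp1, lassoObjective_eq f lam hp hp1, hmean, hsum] at h
  linarith

end Lasso

/-- Theorem 2.2(c): any minimizer of the ℓ1-regularized objective satisfies the
soft-thresholding formula, in both equivalent forms. -/
theorem stmt_7 (N : ℕ) (p : ℝ) (hp : 0 < p) (hp1 : p < 1)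
    (f : (Fin N → Bool) → ℝ) (lam : ℝ) (hlam : 0 ≤ lam) (θ : Fin (N + 1) → ℝ)
    (hmin : ∀ θ' : Fin (N + 1) → ℝ,
      Rres N p f θ + lam * ∑ i : Fin N, |θ i.succ|
        ≤ Rres N p f θ' + lam * ∑ i : Fin N, |θ' i.succ|) :
    ∀ i : Fin N,
      θ i.succ = (2 / sigma p) *
          (max (coeff N p f {i} - lam / sigma p) 0
            - max (-coeff N p f {i} - lam / sigma p) 0) ∧
      θ i.succ = (2 / sigma p) * Real.sign (coeff N p f {i}) *
          max (|coeff N p f {i}| - lam / sigma p) 0 := by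
  intro i
  have hσ : 0 < sigma p := sigma_pos hp hp1
  have hθ := eq_softThreshold_div_of_forall_le (mul_pos hp (sub_pos.2 hp1)) hlam
    (penalizedQuadratic_le_of_forall_le f lam hp hp1 hmin i)
  have hsoft : θ i.succ = 2 / sigma p * softThreshold (lam / sigma p) (coeff N p f {i}) := by
    have hvar : 2 * (p * (1 - p)) = sigma p ^ 2 / 2 := by rw [sigma_sq hp.le hp1.le]; ring
    rw [hθ, softThreshold_mul hσ, hvar]
    field_simp
  refine ⟨hsoft, ?_⟩
  rw [hsoft, softThreshold_eq_sign_mul (div_nonneg hlam hσ.le), mul_assoc]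

end
end Paper
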